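/- Let Ω ⊂ ℝ^r be compact and let d_{SW_2} be the Sliced 2-Wasserstein distance on probability measures on Ω, defined by d_{SW_2}(P,Q)² = ∫_{S^{r−1}} ∫_0^1 (F_{θ*_#P}^{[-1]}(t) − F_{θ*_#Q}^{[-1]}(t))² dt dσ(θ). Then for every γ ≥ 0 the Gaussian Sliced Wasserstein kernel K₂(P,Q) = exp(−γ · d_{SW_2}(P,Q)²) is a positive definite kernel: for every n ∈ ℕ, all probability measures P_1, …, P_n on Ω and all c ∈ ℝ^n, Σ_{i,j=1}^n cᵢ cⱼ exp(−γ · d_{SW_2}(P_i,P_j)²) ≥ 0. -/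

import Mathlib

open MeasureTheory
open scoped RealInnerProductSpace

/-- The generalized inverse cumulative distribution function (quantile function) of a
probability measure `μ` on `ℝ`: `F_μ^{[-1]}(t) = inf {x : F_μ(x) ≥ t}` where
`F_μ(x) = μ((−∞, x])`. -/
noncomputable def invCDF (μ : Measure ℝ) (t : ℝ) : ℝ :=
  sInf {x : ℝ | t ≤ (μ (Set.Iic x)).toReal}

/-- The uniform probability measure on the unit sphere `S^{r-1} ⊂ ℝ^r`
(the normalized surface measure). -/
noncomputable def uniformSphere (r : ℕ) :
    Measure (Metric.sphere (0 : EuclideanSpace ℝ (Fin r)) 1) :=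
  ((volume : Measure (EuclideanSpace ℝ (Fin r))).toSphere Set.univ)⁻¹ •
    (volume : Measure (EuclideanSpace ℝ (Fin r))).toSphere

/-- The squared Sliced 2-Wasserstein distance between probability measures on `ℝ^r`:
`d_{SW₂}(P,Q)² = ∫_{S^{r−1}} ∫_0^1 (F_{θ*_#P}^{[-1]}(t) − F_{θ*_#Q}^{[-1]}(t))² dt dσ(θ)`. -/
noncomputable def slicedW2Sq {r : ℕ} (P Q : Measure (EuclideanSpace ℝ (Fin r))) : ℝ :=
  ∫ θ : Metric.sphere (0 : EuclideanSpace ℝ (Fin r)) 1,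
    (∫ t in Set.Ioc (0 : ℝ) 1,
      (invCDF (P.map fun x => ⟪x, (θ : EuclideanSpace ℝ (Fin r))⟫) t -
        invCDF (Q.map fun x => ⟪x, (θ : EuclideanSpace ℝ (Fin r))⟫) t) ^ 2) ∂(uniformSphere r)

/-!
For `P` supported in a ball, the sliced quantile function `(θ, t) ↦ F_{θ*_#P}^{[-1]}(t)` is
bounded and measurable, hence an element of `L²(σ ⊗ dt|_{(0,1]})`, and `d_{SW₂}(P,Q)²` is the
squared `L²` distance between the sliced quantile functions of `P` and `Q`. It therefore
suffices that `exp(-γ‖vᵢ - vⱼ‖²)` is positive semidefinite for vectors of any real inner product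
space. This matrix is `D (exp (2γ⟪vᵢ, vⱼ⟫)) D` with `D` diagonal, and the entrywise exponential of
a positive semidefinite matrix is a convergent series of nonnegative multiples of its Hadamard
powers, which are positive semidefinite by the Schur product theorem.
-/

open Set Filter Metric ProbabilityTheory

namespace Matrix

variable {ι : Type*} [Fintype ι]

open scoped ComplexOrder in
theorem PosSemidef.map_pow {𝕜 : Type*} [RCLike 𝕜] {A : Matrix ι ι 𝕜} (hA : A.PosSemidef)
    (k : ℕ) : (A.map (· ^ k)).PosSemidef := by
  induction k with
  | zero =>
    convert posSemidef_vecMulVec_self_star (fun _ : ι => (1 : 𝕜)) using 1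
    ext; simp [vecMulVec]
  | succ k ih =>
    have hsucc : A.map (· ^ (k + 1)) = A.map (· ^ k) ⊙ A := by ext; simp [pow_succ]
    rw [hsucc]
    exact ih.hadamard hA

theorem star_dotProduct_mulVec_eq_sum (M : Matrix ι ι ℝ) (c : ι → ℝ) :
    star c ⬝ᵥ M *ᵥ c = ∑ i, ∑ j, c i * c j * M i j := by
  simp only [dotProduct, mulVec, star_trivial, Finset.mul_sum]
  exact Finset.sum_congr rfl fun i _ => Finset.sum_congr rfl fun j _ => by ring

theorem PosSemidef.sum_mul_mul_nonneg {M : Matrix ι ι ℝ} (hM : M.PosSemidef) (c : ι → ℝ) :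
    0 ≤ ∑ i, ∑ j, c i * c j * M i j :=
  star_dotProduct_mulVec_eq_sum M c ▸ hM.dotProduct_mulVec_nonneg c

theorem PosSemidef.map_exp {A : Matrix ι ι ℝ} (hA : A.PosSemidef) :
    (A.map Real.exp).PosSemidef := by
  refine posSemidef_iff_dotProduct_mulVec.2 ⟨hA.isHermitian.map _ fun _ => rfl, fun c => ?_⟩
  have hexp (x : ℝ) : HasSum (fun k : ℕ => x ^ k / k.factorial) (Real.exp x) := by
    rw [Real.exp_eq_exp_ℝ]
    exact NormedSpace.expSeries_div_hasSum_exp x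
  have hsum : HasSum (fun k : ℕ => (k.factorial : ℝ)⁻¹ * ∑ i, ∑ j, c i * c j * A i j ^ k)
      (∑ i, ∑ j, c i * c j * Real.exp (A i j)) := by
    simp only [Finset.mul_sum, mul_left_comm _ (c _ * c _), ← div_eq_inv_mul]
    exact hasSum_sum fun i _ => hasSum_sum fun j _ => (hexp (A i j)).mul_left _
  rw [star_dotProduct_mulVec_eq_sum]
  exact hsum.nonneg fun k => mul_nonneg (by positivity) ((hA.map_pow k).sum_mul_mul_nonneg c)

theorem posSemidef_exp_neg_mul_norm_sub_sq {E : Type*} [NormedAddCommGroup E]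
    [InnerProductSpace ℝ E] (v : ι → E) {γ : ℝ} (hγ : 0 ≤ γ) :
    (of fun i j => Real.exp (-γ * ‖v i - v j‖ ^ 2)).PosSemidef := by
  classical
  set D : Matrix ι ι ℝ := diagonal fun i => Real.exp (-γ * ‖v i‖ ^ 2)
  have hfactor : of (fun i j => Real.exp (-γ * ‖v i - v j‖ ^ 2)) =
      Dᴴ * ((2 * γ) • gram ℝ v).map Real.exp * D := by
    ext i j
    simp only [D, of_apply, norm_sub_sq_real, diagonal_conjTranspose, diagonal_mul, mul_diagonal,
      map_apply, smul_apply, gram_apply, smul_eq_mul, star_trivial, ← Real.exp_add]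
    ring_nf
  rw [hfactor]
  exact ((posSemidef_gram ℝ v).smul (by positivity)).map_exp.conjTranspose_mul_mul_same D

end Matrix

theorem MeasureTheory.MemLp.norm_toLp_sq {α : Type*} [MeasurableSpace α] {μ : Measure α}
    {f : α → ℝ} (hf : MemLp f 2 μ) : ‖hf.toLp f‖ ^ 2 = ∫ x, f x ^ 2 ∂μ := by
  rw [← real_inner_self_eq_norm_sq, L2.inner_def]
  exact integral_congr_ae (hf.coeFn_toLp.mono fun x hx => by simp [hx, sq])

section Quantile

variable {μ : Measure ℝ} [IsProbabilityMeasure μ] {a b t x : ℝ}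

theorem invCDF_eq_sInf_cdf : invCDF μ t = sInf {x | t ≤ cdf μ x} := by
  simp only [invCDF, cdf_eq_real, measureReal_def]

theorem invCDF_le_iff_of_bddBelow (hne : {x | t ≤ cdf μ x}.Nonempty)
    (hbdd : BddBelow {x | t ≤ cdf μ x}) : invCDF μ t ≤ x ↔ t ≤ cdf μ x := by
  rw [invCDF_eq_sInf_cdf]
  refine ⟨fun h => ?_, fun h => csInf_le hbdd h⟩
  -- the infimum lies in the set because the cdf is right continuous
  have hmem : t ≤ cdf μ (sInf {x | t ≤ cdf μ x}) := by
    refine ge_of_tendsto ((cdf μ).right_continuous _ |>.mono Ioi_subset_Ici_self)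
      (eventually_nhdsWithin_of_forall fun y hy => ?_)
    obtain ⟨z, hz, hzy⟩ := exists_lt_of_csInf_lt hne hy
    exact hz.trans ((cdf μ).mono hzy.le)
  exact hmem.trans ((cdf μ).mono h)

theorem cdf_eq_zero_of_lt (hμ : μ (Icc a b) = 1) (hx : x < a) : cdf μ x = 0 := by
  rw [cdf_eq_real, measureReal_eq_zero_iff]
  have hcompl : μ (Icc a b)ᶜ = 0 := (prob_compl_eq_zero_iff measurableSet_Icc).2 hμ
  refine measure_mono_null ?_ hcompl
  intro y (hy : y ≤ x) (hyab : y ∈ Icc a b)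
  exact hx.not_ge (hyab.1.trans hy)

theorem cdf_eq_one_of_le (hμ : μ (Icc a b) = 1) (hx : b ≤ x) : cdf μ x = 1 := by
  rw [cdf_eq_real, measureReal_def, ENNReal.toReal_eq_one_iff]
  exact le_antisymm prob_le_one (hμ ▸ measure_mono fun y hy => hy.2.trans hx)

theorem invCDF_le_iff (hμ : μ (Icc a b) = 1) (ht : t ∈ Ioc 0 1) :
    invCDF μ t ≤ x ↔ t ≤ cdf μ x := by
  refine invCDF_le_iff_of_bddBelow ⟨b, ?_⟩ ⟨a, fun y hy => ?_⟩
  · simpa [cdf_eq_one_of_le hμ le_rfl] using ht.2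
  · by_contra! hya
    have : t ≤ 0 := cdf_eq_zero_of_lt hμ hya ▸ hy
    exact this.not_gt ht.1

theorem invCDF_mem_Icc (hμ : μ (Icc a b) = 1) (ht : t ∈ Ioc 0 1) : invCDF μ t ∈ Icc a b := by
  refine ⟨le_of_not_gt fun hlt => ?_,
    (invCDF_le_iff hμ ht).2 (cdf_eq_one_of_le hμ le_rfl ▸ ht.2)⟩
  have : t ≤ 0 := cdf_eq_zero_of_lt hμ hlt ▸ (invCDF_le_iff hμ ht).1 le_rfl
  exact this.not_gt ht.1

end Quantile

section Projection

variable {E : Type*} [NormedAddCommGroup E] [InnerProductSpace ℝ E] [MeasurableSpace E]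
  [OpensMeasurableSpace E]

instance isProbabilityMeasure_map_inner (P : Measure E) [IsProbabilityMeasure P] (θ : E) :
    IsProbabilityMeasure (P.map fun x => ⟪x, θ⟫) :=
  Measure.isProbabilityMeasure_map (by fun_prop)

theorem map_inner_Icc_eq_one {P : Measure E} [IsProbabilityMeasure P] {R : ℝ}
    (hP : P (closedBall 0 R) = 1) {θ : E} (hθ : θ ∈ sphere 0 1) :
    (P.map fun x => ⟪x, θ⟫) (Icc (-R) R) = 1 := by
  rw [Measure.map_apply (by fun_prop) measurableSet_Icc]
  refine le_antisymm prob_le_one (hP ▸ measure_mono fun x hx => abs_le.1 ?_)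
  simpa [mem_sphere_zero_iff_norm.1 hθ] using (abs_real_inner_le_norm x θ).trans
    (mul_le_mul_of_nonneg_right (mem_closedBall_zero_iff.1 hx) (norm_nonneg θ))

theorem measurable_cdf_map_inner [SecondCountableTopology E] (P : Measure E)
    [IsProbabilityMeasure P] (y : ℝ) :
    Measurable fun θ : sphere (0 : E) 1 => cdf (P.map fun x => ⟪x, (θ : E)⟫) y := by
  have hset : MeasurableSet {q : sphere (0 : E) 1 × E | ⟪q.2, (q.1 : E)⟫ ≤ y} :=
    measurableSet_le (by fun_prop) measurable_const
  convert ENNReal.measurable_toReal.comp (measurable_measure_prodMk_left (ν := P) hset) using 1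
  funext θ
  rw [Function.comp_apply, cdf_eq_real, measureReal_def,
    Measure.map_apply (by fun_prop) measurableSet_Iic]
  rfl

end Projection

section SlicedQuantile

variable {r : ℕ}

local notation "𝔼" => EuclideanSpace ℝ (Fin r)

variable (r) in
noncomputable abbrev slicingMeasure : Measure (sphere (0 : 𝔼) 1 × ℝ) :=
  (uniformSphere r).prod (volume.restrict (Ioc 0 1))

instance : IsFiniteMeasure (uniformSphere r) := by
  refine ⟨?_⟩
  rw [uniformSphere, Measure.smul_apply, smul_eq_mul]
  exact (ENNReal.inv_mul_le_one _).trans_lt ENNReal.one_lt_top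

noncomputable def slicedQuantile (P : Measure 𝔼) (p : sphere (0 : 𝔼) 1 × ℝ) : ℝ :=
  invCDF (P.map fun x => ⟪x, (p.1 : 𝔼)⟫) p.2

theorem slicedW2Sq_eq_norm_sub_sq {P Q : Measure 𝔼}
    (hP : MemLp (slicedQuantile P) 2 (slicingMeasure r))
    (hQ : MemLp (slicedQuantile Q) 2 (slicingMeasure r)) :
    slicedW2Sq P Q = ‖hP.toLp - hQ.toLp‖ ^ 2 := by
  rw [← hP.toLp_sub hQ, MemLp.norm_toLp_sq, integral_prod _ (hP.sub hQ).integrable_sq]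
  rfl

theorem aemeasurable_slicedQuantile {P : Measure 𝔼} [IsProbabilityMeasure P] {R : ℝ}
    (hP : P (closedBall 0 R) = 1) :
    AEMeasurable (slicedQuantile P) (slicingMeasure r) := by
  rw [slicingMeasure, ← Measure.restrict_univ (μ := uniformSphere r), Measure.prod_restrict]
  refine aemeasurable_restrict_of_measurable_subtype (MeasurableSet.univ.prod measurableSet_Ioc)
    (measurable_of_Iic fun y => ?_)
  have hpreimage : (fun p : ↥(univ ×ˢ Ioc 0 1 : Set (sphere (0 : 𝔼) 1 × ℝ)) =>
      slicedQuantile P ↑p) ⁻¹' Iic y =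
      Subtype.val ⁻¹' {p | p.2 ≤ cdf (P.map fun x => ⟪x, (p.1 : 𝔼)⟫) y} := by
    ext ⟨p, hp⟩
    exact invCDF_le_iff (map_inner_Icc_eq_one hP p.1.2) hp.2
  rw [hpreimage]
  exact (measurableSet_le measurable_snd
    ((measurable_cdf_map_inner P y).comp measurable_fst)).preimage measurable_subtype_coe

theorem memLp_slicedQuantile {P : Measure 𝔼} [IsProbabilityMeasure P] {R : ℝ}
    (hP : P (closedBall 0 R) = 1) :
    MemLp (slicedQuantile P) 2 (slicingMeasure r) := by
  have hmem : ∀ᵐ p ∂(slicingMeasure r), p.2 ∈ Ioc (0 : ℝ) 1 :=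
    Measure.quasiMeasurePreserving_snd.ae (ae_restrict_mem measurableSet_Ioc)
  refine MemLp.of_bound (aemeasurable_slicedQuantile hP).aestronglyMeasurable R
    (hmem.mono fun p hp => ?_)
  exact abs_le.2 (invCDF_mem_Icc (map_inner_Icc_eq_one hP p.1.2) hp)

end SlicedQuantile

/-- **The Gaussian Sliced 2-Wasserstein kernel is positive definite.**
Let `Ω ⊂ ℝ^r` be compact.  For every `γ ≥ 0`, the kernel
`K₂(P,Q) = exp(−γ·d_{SW₂}(P,Q)²)` is positive definite on the probability measures on `Ω`:
for every `n`, all probability measures `P₁, …, Pₙ` on `Ω` and all `c ∈ ℝⁿ`,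
`∑_{i,j} cᵢ cⱼ exp(−γ·d_{SW₂}(Pᵢ,Pⱼ)²) ≥ 0`. -/
theorem gaussian_slicedW2_kernel_posdef {r : ℕ} (Ω : Set (EuclideanSpace ℝ (Fin r)))
    (hΩ : IsCompact Ω) (γ : ℝ) (hγ : 0 ≤ γ) :
    ∀ (n : ℕ) (P : Fin n → Measure (EuclideanSpace ℝ (Fin r))),
      (∀ i, IsProbabilityMeasure (P i)) → (∀ i, P i Ω = 1) →
      ∀ c : Fin n → ℝ,
        0 ≤ ∑ i, ∑ j, c i * c j * Real.exp (-γ * slicedW2Sq (P i) (P j)) := by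
  intro n P hP hPΩ c
  obtain ⟨R, hΩR⟩ := hΩ.isBounded.subset_closedBall 0
  have hmem (i : Fin n) : MemLp (slicedQuantile (P i)) 2 (slicingMeasure r) :=
    have := hP i
    memLp_slicedQuantile (le_antisymm prob_le_one (hPΩ i ▸ measure_mono hΩR))
  simpa only [slicedW2Sq_eq_norm_sub_sq (hmem _) (hmem _), Matrix.of_apply] using
    (Matrix.posSemidef_exp_neg_mul_norm_sub_sq (fun i => (hmem i).toLp) hγ).sum_mul_mul_nonneg c
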